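/- arXiv:2602.13453 — 5 statements merged into one kernel-verified Lean document; each statement's English description precedes it below -/
import Mathlib

section
/- Under no-anticipation, conditional parallel trends, and overlap, for any periods t' < s ≤ t < s', the cohort-s ATT at time t satisfies E[τ_{it} | t* = s] = E[Y_{it} − Y_{it'} | t* = s] − E[ E[Y_{it} − Y_{it'} | t* = s', X] | t* = s ], where τ_{it} = Y_{it}(s) − Y_{it}(0). -/
open Finset
open scoped Classical

/-!
For a unit of cohort `s`, no anticipation turns the observed long difference `Y t - Y t'` into
`Y_t(s) - Y_{t'}(0)`, so the first term on the right is `E[Y_t(s) - Y_{t'}(0) ∣ t* = s]` and it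
remains to identify the counterfactual trend `E[Y_t(0) - Y_{t'}(0) ∣ t* = s]`. For a unit of the
not-yet-treated cohort `s' > t` the observed long difference is the untreated one. Summing the
one-period parallel trends from `t'` to `t`, the untreated long-difference trend given `X` is the
same in cohorts `s` and `s'` (overlap makes both conditional expectations meaningful), and the
tower property over `X` within cohort `s` finishes the argument.
-/

/-- Conditional expectation `E[Z ∣ A]` on a finite probability space with mass
function `P` (junk value `0` when `A` has probability zero). -/
noncomputable def cexp {Ω : Type*} [Fintype Ω] (P : Ω → ℝ) (A : Ω → Prop) (Z : Ω → ℝ) : ℝ :=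
  (∑ ω, if A ω then P ω * Z ω else 0) / (∑ ω, if A ω then P ω else 0)

section CondExp

variable {Ω : Type*} [Fintype Ω] (P : Ω → ℝ)

theorem cexp_def (A : Ω → Prop) [DecidablePred A] (Z : Ω → ℝ) :
    cexp P A Z = (∑ ω, if A ω then P ω * Z ω else 0) / (∑ ω, if A ω then P ω else 0) := by
  unfold cexp
  congr 1 <;> exact sum_congr rfl fun ω _ => by split_ifs <;> rfl

theorem pos_mass_of_mem (hP : ∀ ω, 0 ≤ P ω) {A : Ω → Prop} [DecidablePred A] {ω : Ω}
    (hA : A ω) (hω : P ω ≠ 0) : 0 < ∑ ω', if A ω' then P ω' else 0 :=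
  sum_pos' (fun ω' _ => by split_ifs <;> simp [hP ω'])
    ⟨ω, mem_univ ω, by simpa [hA] using lt_of_le_of_ne (hP ω) hω.symm⟩

theorem cexp_congr {A : Ω → Prop} {Z₁ Z₂ : Ω → ℝ} (h : ∀ ω, A ω → P ω ≠ 0 → Z₁ ω = Z₂ ω) :
    cexp P A Z₁ = cexp P A Z₂ := by
  unfold cexp
  congr 1
  refine sum_congr rfl fun ω _ => ?_
  by_cases hA : A ω
  · by_cases hp : P ω = 0
    · simp [hA, hp]
    · simp [hA, h ω hA hp]
  · simp [hA]

theorem cexp_add (A : Ω → Prop) (Z₁ Z₂ : Ω → ℝ) :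
    cexp P A (fun ω => Z₁ ω + Z₂ ω) = cexp P A Z₁ + cexp P A Z₂ := by
  unfold cexp
  rw [← add_div, ← sum_add_distrib]
  congr 1
  exact sum_congr rfl fun ω _ => by split_ifs <;> ring

theorem cexp_sub (A : Ω → Prop) (Z₁ Z₂ : Ω → ℝ) :
    cexp P A (fun ω => Z₁ ω - Z₂ ω) = cexp P A Z₁ - cexp P A Z₂ := by
  unfold cexp
  rw [div_sub_div_same, ← sum_sub_distrib]
  congr 1
  exact sum_congr rfl fun ω _ => by split_ifs <;> ring

theorem cexp_sub_eq_of_forall_succ {A B : Ω → Prop} {f : ℕ → Ω → ℝ}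
    (h : ∀ n, cexp P A (fun ω => f (n + 1) ω - f n ω) = cexp P B (fun ω => f (n + 1) ω - f n ω))
    {a b : ℕ} (hab : a ≤ b) :
    cexp P A (fun ω => f b ω - f a ω) = cexp P B (fun ω => f b ω - f a ω) := by
  induction b, hab using Nat.le_induction with
  | base => simp [cexp]
  | succ n _ ih =>
    have telescope : ∀ C : Ω → Prop, cexp P C (fun ω => f (n + 1) ω - f a ω)
        = cexp P C (fun ω => f (n + 1) ω - f n ω) + cexp P C (fun ω => f n ω - f a ω) := by
      intro C
      rw [← cexp_add]
      exact cexp_congr P fun ω _ _ => by ring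
    rw [telescope, telescope, h, ih]

theorem cexp_tower {𝓧 : Type*} (hP : ∀ ω, 0 ≤ P ω) (A : Ω → Prop) (X : Ω → 𝓧) (G : Ω → ℝ) :
    cexp P A (fun ω => cexp P (fun ω' => A ω' ∧ X ω' = X ω) G) = cexp P A G := by
  simp only [cexp_def]
  congr 1
  set m : 𝓧 → ℝ := fun x => ∑ ω, if A ω ∧ X ω = x then P ω else 0
  -- Swap the two sums; the fibre mass `m (X ω')` then cancels, except where `P ω' = 0`.
  calc (∑ ω, if A ω then P ω *
          ((∑ ω', if A ω' ∧ X ω' = X ω then P ω' * G ω' else 0) / m (X ω)) else 0)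
      = ∑ ω, ∑ ω', if A ω' ∧ (A ω ∧ X ω = X ω') then P ω * P ω' * G ω' / m (X ω') else 0 := by
        refine sum_congr rfl fun ω _ => ?_
        by_cases hA : A ω
        · rw [if_pos hA, mul_div_assoc', mul_sum, sum_div]
          refine sum_congr rfl fun ω' _ => ?_
          by_cases h : A ω' ∧ X ω' = X ω
          · rw [if_pos h, if_pos ⟨h.1, hA, h.2.symm⟩, h.2]
            ring
          · rw [if_neg h, if_neg (by tauto)]
            simp
        · simp [hA]
    _ = ∑ ω', if A ω' then P ω' * G ω' * m (X ω') / m (X ω') else 0 := by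
        rw [sum_comm]
        refine sum_congr rfl fun ω' _ => ?_
        by_cases hA : A ω'
        · rw [if_pos hA, mul_sum, sum_div]
          exact sum_congr rfl fun ω _ => by simp only [hA, true_and]; split_ifs <;> ring
        · simp [hA]
    _ = ∑ ω', if A ω' then P ω' * G ω' else 0 := by
        refine sum_congr rfl fun ω' _ => ?_
        by_cases hA : A ω'
        · by_cases hp : P ω' = 0
          · simp [hp]
          · have hm : m (X ω') ≠ 0 :=
              (pos_mass_of_mem P hP (A := fun ω => A ω ∧ X ω = X ω') ⟨hA, rfl⟩ hp).ne'
            rw [if_pos hA, if_pos hA, mul_div_cancel_right₀ _ hm]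
        · simp [hA]

end CondExp

theorem statement0_general
    {Ω 𝓧 : Type*} [Fintype Ω]
    (P : Ω → ℝ) (hP : ∀ ω, 0 ≤ P ω)
    (tstar : Ω → ℕ∞) (X : Ω → 𝓧)
    (Ypot : ℕ → ℕ∞ → Ω → ℝ) (Y : ℕ → Ω → ℝ)
    (hY : ∀ t ω, Y t ω = Ypot t (tstar ω) ω)
    -- no treatment anticipation: before adoption, outcomes follow the untreated path
    (hNA : ∀ (t : ℕ) (a : ℕ∞) (ω : Ω), (t : ℕ∞) < a → Ypot t a ω = Ypot t ⊤ ω)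
    -- conditional parallel trends
    (hCPT : ∀ (t : ℕ) (u : ℕ∞) (x : 𝓧),
      0 < (∑ ω, if tstar ω = u ∧ X ω = x then P ω else 0) →
      cexp P (fun ω => tstar ω = u ∧ X ω = x) (fun ω => Ypot (t + 1) ⊤ ω - Ypot t ⊤ ω)
        = cexp P (fun ω => X ω = x) (fun ω => Ypot (t + 1) ⊤ ω - Ypot t ⊤ ω))
    (s : ℕ) (s' : ℕ∞) (t t' : ℕ)
    (ht's : t' < s) (hst : s ≤ t) (hts' : (t : ℕ∞) < s')
    -- overlap / positivity
    (hov : ∀ x : 𝓧, 0 < (∑ ω, if tstar ω = (s : ℕ∞) ∧ X ω = x then P ω else 0) →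
      0 < (∑ ω, if tstar ω = s' ∧ X ω = x then P ω else 0)) :
    cexp P (fun ω => tstar ω = (s : ℕ∞)) (fun ω => Ypot t (s : ℕ∞) ω - Ypot t ⊤ ω)
      = cexp P (fun ω => tstar ω = (s : ℕ∞)) (fun ω => Y t ω - Y t' ω)
        - cexp P (fun ω => tstar ω = (s : ℕ∞))
            (fun ω => cexp P (fun ω' => tstar ω' = s' ∧ X ω' = X ω)
              (fun ω' => Y t ω' - Y t' ω')) := by
  have ht't : t' ≤ t := (ht's.trans_le hst).le
  have htrend (u : ℕ∞) (x : 𝓧) (hu : 0 < ∑ ω, if tstar ω = u ∧ X ω = x then P ω else 0) :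
      cexp P (fun ω => tstar ω = u ∧ X ω = x) (fun ω => Ypot t ⊤ ω - Ypot t' ⊤ ω)
        = cexp P (fun ω => X ω = x) (fun ω => Ypot t ⊤ ω - Ypot t' ⊤ ω) :=
    cexp_sub_eq_of_forall_succ P (f := fun n => Ypot n ⊤) (fun n => hCPT n u x hu) ht't
  have hcohort_s : cexp P (fun ω => tstar ω = (s : ℕ∞)) (fun ω => Y t ω - Y t' ω)
      = cexp P (fun ω => tstar ω = (s : ℕ∞)) (fun ω => Ypot t s ω - Ypot t' ⊤ ω) :=
    cexp_congr P fun ω hω _ => by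
      rw [hY, hY, hω, hNA t' s ω (by exact_mod_cast ht's)]
  have hcohort_s' (x : 𝓧) :
      cexp P (fun ω => tstar ω = s' ∧ X ω = x) (fun ω => Y t ω - Y t' ω)
        = cexp P (fun ω => tstar ω = s' ∧ X ω = x) (fun ω => Ypot t ⊤ ω - Ypot t' ⊤ ω) :=
    cexp_congr P fun ω hω _ => by
      rw [hY, hY, hω.1, hNA t s' ω hts', hNA t' s' ω ((Nat.cast_le.mpr ht't).trans_lt hts')]
  have hcontrol : cexp P (fun ω => tstar ω = (s : ℕ∞))
        (fun ω => cexp P (fun ω' => tstar ω' = s' ∧ X ω' = X ω) (fun ω' => Y t ω' - Y t' ω'))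
      = cexp P (fun ω => tstar ω = (s : ℕ∞)) (fun ω => Ypot t ⊤ ω - Ypot t' ⊤ ω) := by
    rw [← cexp_tower P hP _ X (fun ω => Ypot t ⊤ ω - Ypot t' ⊤ ω)]
    refine cexp_congr P fun ω hω hp => ?_
    have hpos := pos_mass_of_mem P hP (A := fun ω' => tstar ω' = s ∧ X ω' = X ω) ⟨hω, rfl⟩ hp
    rw [hcohort_s', htrend s' _ (hov _ hpos), htrend s _ hpos]
  rw [hcohort_s, hcontrol, ← cexp_sub]
  exact cexp_congr P fun ω _ _ => by ring

/-- identification lemma. On a finite probability space, with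
potential outcomes `Ypot t a` (outcome at time `t` under adoption time `a`),
no anticipation, conditional parallel trends, overlap, and periods
`t' < s ≤ t < s'`, the cohort-`s` ATT at time `t` equals the DiD contrast
`E[Y_t − Y_{t'} ∣ t* = s] − E[ E[Y_t − Y_{t'} ∣ t* = s', X] ∣ t* = s ]`. -/
theorem statement0
    {Ω 𝓧 : Type*} [Fintype Ω]
    (P : Ω → ℝ) (hP : ∀ ω, 0 ≤ P ω) (hP1 : ∑ ω, P ω = 1)
    (tstar : Ω → ℕ∞) (X : Ω → 𝓧)
    (Ypot : ℕ → ℕ∞ → Ω → ℝ) (Y : ℕ → Ω → ℝ)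
    (hY : ∀ t ω, Y t ω = Ypot t (tstar ω) ω)
    -- no treatment anticipation: before adoption, outcomes follow the untreated path
    (hNA : ∀ (t : ℕ) (a : ℕ∞) (ω : Ω), (t : ℕ∞) < a → Ypot t a ω = Ypot t ⊤ ω)
    -- conditional parallel trends
    (hCPT : ∀ (t : ℕ) (u : ℕ∞) (x : 𝓧),
      0 < (∑ ω, if tstar ω = u ∧ X ω = x then P ω else 0) →
      cexp P (fun ω => tstar ω = u ∧ X ω = x) (fun ω => Ypot (t + 1) ⊤ ω - Ypot t ⊤ ω)
        = cexp P (fun ω => X ω = x) (fun ω => Ypot (t + 1) ⊤ ω - Ypot t ⊤ ω))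
    (s : ℕ) (s' : ℕ∞) (t t' : ℕ)
    (ht's : t' < s) (hst : s ≤ t) (hts' : (t : ℕ∞) < s')
    -- overlap / positivity
    (hps : 0 < (∑ ω, if tstar ω = (s : ℕ∞) then P ω else 0))
    (hov : ∀ x : 𝓧, 0 < (∑ ω, if tstar ω = (s : ℕ∞) ∧ X ω = x then P ω else 0) →
      0 < (∑ ω, if tstar ω = s' ∧ X ω = x then P ω else 0)) :
    cexp P (fun ω => tstar ω = (s : ℕ∞)) (fun ω => Ypot t (s : ℕ∞) ω - Ypot t ⊤ ω)
      = cexp P (fun ω => tstar ω = (s : ℕ∞)) (fun ω => Y t ω - Y t' ω)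
        - cexp P (fun ω => tstar ω = (s : ℕ∞))
            (fun ω => cexp P (fun ω' => tstar ω' = s' ∧ X ω' = X ω)
              (fun ω' => Y t ω' - Y t' ω')) :=
  statement0_general P hP tstar X Ypot Y hY hNA hCPT s s' t t' ht's hst hts' hov
end

section
/- For the treatment indicator D_{it} = 1(t ≥ t_i*), with unit weights w_i and period-inclusion indicators λ_t ∈ {0,1}, the demeaned treatment satisfies D_{it} − D̄_i − D̃_t + D̄ = Σ_{s<∞} (1(t_i*=s) − p̂_s^w)(1(t≥s) − Λ_s), where D̄_i = Σ_t λ_t D_{it}/Σ_t λ_t, D̃_t = Σ_i w_i D_{it}/Σ_i w_i, D̄ = Σ_i Σ_t w_i λ_t D_{it}/(Σ_i w_i Σ_t λ_t), p̂_s^w = Σ_i w_i 1(t_i*=s)/Σ_i w_i, and Λ_s = Σ_t λ_t 1(t≥s)/Σ_t λ_t. -/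
open Finset

noncomputable section

/-- Treatment indicator `D_{it} = 1(t ≥ t_i*)`. -/
def Dit {n : ℕ} (tstar : Fin n → ℕ∞) (i : Fin n) (t : ℕ) : ℝ :=
  if tstar i ≤ (t : ℕ∞) then 1 else 0

/-- Unit-level λ-weighted mean of treatment: `D̄_i`. -/
def DbarI {n : ℕ} (T : ℕ) (lam : ℕ → ℝ) (tstar : Fin n → ℕ∞) (i : Fin n) : ℝ :=
  (∑ t ∈ Finset.Icc 1 T, lam t * Dit tstar i t) / (∑ t ∈ Finset.Icc 1 T, lam t)

/-- Period-level w-weighted mean of treatment: `D̃_t`. -/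
def DtildeT {n : ℕ} (w : Fin n → ℝ) (tstar : Fin n → ℕ∞) (t : ℕ) : ℝ :=
  (∑ i, w i * Dit tstar i t) / (∑ i, w i)

/-- Overall weighted mean of treatment: `D̄`. -/
def Dbar {n : ℕ} (T : ℕ) (w : Fin n → ℝ) (lam : ℕ → ℝ) (tstar : Fin n → ℕ∞) : ℝ :=
  (∑ i, ∑ t ∈ Finset.Icc 1 T, w i * lam t * Dit tstar i t) /
    ((∑ i, w i) * (∑ t ∈ Finset.Icc 1 T, lam t))

/-- Demeaned treatment `D̈_{it} = D_{it} − D̄_i − D̃_t + D̄`. -/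
def Ddot {n : ℕ} (T : ℕ) (w : Fin n → ℝ) (lam : ℕ → ℝ) (tstar : Fin n → ℕ∞)
    (i : Fin n) (t : ℕ) : ℝ :=
  Dit tstar i t - DbarI T lam tstar i - DtildeT w tstar t + Dbar T w lam tstar

/-- Weighted cohort share `p̂_c^w` (cohort `c ∈ ℕ∞`, with `⊤` the never treated). -/
def phat {n : ℕ} (w : Fin n → ℝ) (tstar : Fin n → ℕ∞) (c : ℕ∞) : ℝ :=
  (∑ i, w i * (if tstar i = c then 1 else 0)) / (∑ i, w i)

/-- Share of included periods `t ≥ u`: `Λ_u`. -/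
def Lam (T : ℕ) (lam : ℕ → ℝ) (u : ℕ) : ℝ :=
  (∑ t ∈ Finset.Icc 1 T, lam t * (if u ≤ t then 1 else 0)) / (∑ t ∈ Finset.Icc 1 T, lam t)

/-- Weighted two-way fixed effects estimator `τ̂(w, λ)`. -/
def tauhat {n : ℕ} (T : ℕ) (w : Fin n → ℝ) (lam : ℕ → ℝ) (tstar : Fin n → ℕ∞)
    (Y : Fin n → ℕ → ℝ) : ℝ :=
  (∑ i, ∑ t ∈ Finset.Icc 1 T, w i * lam t * Y i t * Ddot T w lam tstar i t) /
    (∑ i, ∑ t ∈ Finset.Icc 1 T, w i * lam t * Dit tstar i t * Ddot T w lam tstar i t)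

end

/-- The demeaned treatment decomposes over finite cohorts:
`D_{it} − D̄_i − D̃_t + D̄ = Σ_{s<∞} (1(t_i* = s) − p̂_s^w)(1(t ≥ s) − Λ_s)`. -/
theorem statement1 {n T : ℕ} (w : Fin n → ℝ) (lam : ℕ → ℝ) (tstar : Fin n → ℕ∞)
    (hw : ∀ i, 0 ≤ w i) (hwpos : 0 < ∑ i, w i)
    (hlam : ∀ t, lam t = 0 ∨ lam t = 1) (hlam2 : 2 ≤ ∑ t ∈ Finset.Icc 1 T, lam t)
    (htstar : ∀ i, tstar i = ⊤ ∨ ∃ s ∈ Finset.Icc 2 T, tstar i = (s : ℕ∞)) :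
    ∀ (i : Fin n) (t : ℕ),
      Ddot T w lam tstar i t
        = ∑ s ∈ Finset.Icc 2 T,
            ((if tstar i = (s : ℕ∞) then (1 : ℝ) else 0) - phat w tstar (s : ℕ∞)) *
              ((if s ≤ t then (1 : ℝ) else 0) - Lam T lam s) := by
  intro i t
  have hDit : ∀ (j : Fin n) (u : ℕ), Dit tstar j u
      = ∑ s ∈ Finset.Icc 2 T,
          (if tstar j = (s : ℕ∞) then (1:ℝ) else 0) * (if s ≤ u then (1:ℝ) else 0) := by
    intro j u
    rcases htstar j with h | ⟨s0, hs0, hs0e⟩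
    · rw [Finset.sum_eq_zero]
      · simp [Dit, h]
      · intro s hs
        have : (⊤ : ℕ∞) ≠ (s : ℕ∞) := by simp
        simp [h, this]
    · rw [Finset.sum_eq_single s0]
      · have : ((s0 : ℕ∞) ≤ (u : ℕ∞)) ↔ s0 ≤ u := by exact_mod_cast Iff.rfl
        simp [Dit, hs0e, this]
      · intro s hs hne
        have : (s0 : ℕ∞) ≠ (s : ℕ∞) := by exact_mod_cast (Ne.symm hne)
        simp [hs0e, this]
      · intro h; exact absurd hs0 h
  have hDbarI : DbarI T lam tstar i
      = ∑ s ∈ Finset.Icc 2 T, (if tstar i = (s:ℕ∞) then (1:ℝ) else 0) * Lam T lam s := by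
    unfold DbarI Lam
    rw [Finset.sum_congr rfl (fun u _ => by rw [hDit i u, Finset.mul_sum]), Finset.sum_comm,
      Finset.sum_div]
    refine Finset.sum_congr rfl (fun s _ => ?_)
    rw [← mul_div_assoc, Finset.mul_sum]
    congr 1
    exact Finset.sum_congr rfl (fun u _ => by ring)
  have hDtilde : DtildeT w tstar t
      = ∑ s ∈ Finset.Icc 2 T, phat w tstar (s:ℕ∞) * (if s ≤ t then (1:ℝ) else 0) := by
    unfold DtildeT phat
    rw [Finset.sum_congr rfl (fun j _ => by rw [hDit j t, Finset.mul_sum]), Finset.sum_comm,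
      Finset.sum_div]
    refine Finset.sum_congr rfl (fun s _ => ?_)
    rw [div_mul_eq_mul_div]
    congr 1
    rw [Finset.sum_mul]
    exact Finset.sum_congr rfl (fun j _ => by ring)
  have hDbar : Dbar T w lam tstar
      = ∑ s ∈ Finset.Icc 2 T, phat w tstar (s:ℕ∞) * Lam T lam s := by
    unfold Dbar phat Lam
    have key : (∑ j, ∑ u ∈ Finset.Icc 1 T, w j * lam u * Dit tstar j u)
        = ∑ s ∈ Finset.Icc 2 T,
            (∑ j, w j * (if tstar j = (s:ℕ∞) then (1:ℝ) else 0)) *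
            (∑ u ∈ Finset.Icc 1 T, lam u * (if s ≤ u then (1:ℝ) else 0)) := by
      rw [Finset.sum_congr rfl (fun j _ => Finset.sum_congr rfl (fun u _ => by
        rw [hDit j u, Finset.mul_sum]))]
      rw [Finset.sum_congr rfl (fun j _ => Finset.sum_comm), Finset.sum_comm]
      refine Finset.sum_congr rfl (fun s _ => ?_)
      rw [Finset.sum_mul]
      refine Finset.sum_congr rfl (fun j _ => ?_)
      rw [Finset.mul_sum]
      exact Finset.sum_congr rfl (fun u _ => by ring)
    rw [key, Finset.sum_div]
    exact Finset.sum_congr rfl (fun s _ => by rw [div_mul_div_comm])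
  unfold Ddot
  rw [hDit i t, hDbarI, hDtilde, hDbar, ← Finset.sum_sub_distrib, ← Finset.sum_sub_distrib,
    ← Finset.sum_add_distrib]
  exact Finset.sum_congr rfl (fun s _ => by ring)
end

section
/- The numerator of the weighted 2WFE estimator can be decomposed into 2x2 difference-in-differences comparisons: Σ_i Σ_t w_i λ_t Y_{it}(D_{it} − D̄_i − D̃_t + D̄) = (Σ_i w_i / Σ_t λ_t) · Σ_{s<∞} Σ_{s'≠s} Σ_{t≥s, λ_t=1} Σ_{t'<s, λ_{t'}=1} p̂_s^w p̂_{s'}^w τ̂_{s'}^s(t,t'), where τ̂_{s'}^s(t,t') = [Σ_i w_i 1(t_i*=s)(Y_{it} − Y_{it'})]/[Σ_i w_i 1(t_i*=s)] − [Σ_i w_i 1(t_i*=s')(Y_{it} − Y_{it'})]/[Σ_i w_i 1(t_i*=s')]. -/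
open Finset

/-- The 2x2 DiD comparison `τ̂_{c'}^{c}(t, t')` between cohorts `c` and `c'`. -/
noncomputable def tau2x2 {n : ℕ} (w : Fin n → ℝ) (tstar : Fin n → ℕ∞)
    (Y : Fin n → ℕ → ℝ) (c c' : ℕ∞) (t t' : ℕ) : ℝ :=
  (∑ i, w i * (if tstar i = c then 1 else 0) * (Y i t - Y i t')) /
      (∑ i, w i * (if tstar i = c then 1 else 0))
    - (∑ i, w i * (if tstar i = c' then 1 else 0) * (Y i t - Y i t')) /
        (∑ i, w i * (if tstar i = c' then 1 else 0))

/-!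
For fixed `t`, `D̈_{it}` is the `w`-demeaning across units of `D_{it} − D̄_i`, which depends on
`i` only through its cohort. So the period-`t` numerator is a weighted covariance, and grouping
units by cohort turns it into `(1/W) ∑_{c,c'} a_c(t) (S_{c'} G_c(t) − S_c G_{c'}(t))`, with `S`
the cohort weights, `G` the cohort outcome totals and `a_c = L (d_c − D̄_c)`. Summed against
`λ_t`, the demeaned path of cohort `s` pairs every post-period `t ≥ s` with every pre-period
`t' < s`, and `p̂_s p̂_{c'} τ̂_{c'}^s(t,t')` is exactly the increment of
`(S_{c'} G_s − S_s G_{c'}) / W²` from `t'` to `t`. The never treated cohort has a zero demeaned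
path and the diagonal `c' = s` contributes nothing.
-/

namespace TwoWayFE

variable {n : ℕ}

def cohortD (c : ℕ∞) (t : ℕ) : ℝ := if c ≤ (t : ℕ∞) then 1 else 0

/-- `L · (d_c(t) − D̄_c)` with `L = ∑ λ`: the λ-demeaned treatment path of cohort `c`,
scaled by `L` so that no division occurs. -/
noncomputable def demeanedD (T : ℕ) (lam : ℕ → ℝ) (c : ℕ∞) (t : ℕ) : ℝ :=
  (∑ r ∈ Icc 1 T, lam r) * cohortD c t - ∑ r ∈ Icc 1 T, lam r * cohortD c r

noncomputable def cohortWeight (w : Fin n → ℝ) (tstar : Fin n → ℕ∞) (c : ℕ∞) : ℝ :=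
  ∑ i, w i * (if tstar i = c then 1 else 0)

noncomputable def cohortTotal (w : Fin n → ℝ) (tstar : Fin n → ℕ∞) (Y : Fin n → ℕ → ℝ)
    (c : ℕ∞) (t : ℕ) : ℝ :=
  ∑ i, w i * (if tstar i = c then 1 else 0) * Y i t

/-- `W² p̂_c p̂_{c'} (Ȳ_c(t) − Ȳ_{c'}(t))`, written without the cohort means. -/
noncomputable def crossDiff (w : Fin n → ℝ) (tstar : Fin n → ℕ∞) (Y : Fin n → ℕ → ℝ)
    (c c' : ℕ∞) (t : ℕ) : ℝ :=
  cohortWeight w tstar c' * cohortTotal w tstar Y c t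
    - cohortWeight w tstar c * cohortTotal w tstar Y c' t

theorem Dit_eq_cohortD (tstar : Fin n → ℕ∞) (i : Fin n) (t : ℕ) :
    Dit tstar i t = cohortD (tstar i) t :=
  rfl

theorem cohortD_top (t : ℕ) : cohortD ⊤ t = 0 := by
  simp [cohortD]

theorem cohortD_natCast (s t : ℕ) : cohortD s t = if s ≤ t then 1 else 0 := by
  simp [cohortD]

theorem demeanedD_top (T : ℕ) (lam : ℕ → ℝ) (t : ℕ) : demeanedD T lam ⊤ t = 0 := by
  simp [demeanedD, cohortD_top]

theorem sum_Icc_one_split {M : Type*} [AddCommMonoid M] (f : ℕ → M) {s T : ℕ}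
    (hs : 1 ≤ s) (hsT : s ≤ T + 1) :
    ∑ t ∈ Icc 1 T, f t = ∑ t ∈ Icc 1 (s - 1), f t + ∑ t ∈ Icc s T, f t := by
  rw [← sum_filter_add_sum_filter_not (Icc 1 T) (· < s)]
  congr 1 <;> refine sum_congr (ext fun t => ?_) fun _ _ => rfl <;> simp <;> omega

theorem sum_mul_demeanedD_natCast (T : ℕ) (lam : ℕ → ℝ) (F : ℕ → ℝ) {s : ℕ}
    (hs : 1 ≤ s) (hsT : s ≤ T + 1) :
    ∑ t ∈ Icc 1 T, lam t * demeanedD T lam s t * F t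
      = ∑ t ∈ Icc s T, ∑ t' ∈ Icc 1 (s - 1), lam t * lam t' * (F t - F t') := by
  have hpre : ∀ t ∈ Icc 1 (s - 1), cohortD s t = 0 := fun t ht => by
    rw [cohortD_natCast, if_neg (by simp at ht; omega)]
  have hpost : ∀ t ∈ Icc s T, cohortD s t = 1 := fun t ht => by
    rw [cohortD_natCast, if_pos (mem_Icc.mp ht).1]
  have hL := sum_Icc_one_split lam hs hsT
  have hP : ∑ r ∈ Icc 1 T, lam r * cohortD s r = ∑ r ∈ Icc s T, lam r := by
    rw [sum_Icc_one_split _ hs hsT, sum_eq_zero fun t ht => by rw [hpre t ht, mul_zero],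
      zero_add]
    exact sum_congr rfl fun t ht => by rw [hpost t ht, mul_one]
  rw [sum_Icc_one_split _ hs hsT,
    sum_congr rfl fun t ht => show lam t * demeanedD T lam s t * F t
      = -(∑ r ∈ Icc s T, lam r) * (lam t * F t) by rw [demeanedD, hP, hpre t ht]; ring,
    sum_congr rfl fun t ht => show lam t * demeanedD T lam s t * F t
      = (∑ r ∈ Icc 1 (s - 1), lam r) * (lam t * F t) by
        rw [demeanedD, hP, hL, hpost t ht]; ring,
    ← mul_sum, ← mul_sum, neg_mul, neg_add_eq_sub, mul_comm, sum_mul_sum, sum_mul_sum,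
    ← sum_sub_distrib]
  refine sum_congr rfl fun t _ => ?_
  rw [← sum_sub_distrib]
  exact sum_congr rfl fun t' _ => by ring

theorem Ddot_eq (T : ℕ) (w : Fin n → ℝ) (lam : ℕ → ℝ) (tstar : Fin n → ℕ∞)
    (hL : ∑ r ∈ Icc 1 T, lam r ≠ 0) (i : Fin n) (t : ℕ) :
    Ddot T w lam tstar i t
      = (demeanedD T lam (tstar i) t
          - (∑ j, w j * demeanedD T lam (tstar j) t) / ∑ j, w j) / ∑ r ∈ Icc 1 T, lam r := by
  have hsum : ∑ j, w j * demeanedD T lam (tstar j) t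
      = (∑ r ∈ Icc 1 T, lam r) * ∑ j, w j * Dit tstar j t
        - ∑ j, ∑ r ∈ Icc 1 T, w j * lam r * Dit tstar j r := by
    simp only [demeanedD, mul_sub, sum_sub_distrib, mul_sum, Dit_eq_cohortD]
    congr 1 <;> exact sum_congr rfl fun _ _ => by ring_nf
  rw [hsum]
  simp only [Ddot, DbarI, DtildeT, Dbar, demeanedD, Dit_eq_cohortD]
  field_simp
  ring

theorem sum_mul_comp_eq_sum_cohort (w : Fin n → ℝ) (tstar : Fin n → ℕ∞) {C : Finset ℕ∞}
    (hC : ∀ i, tstar i ∈ C) (f : ℕ∞ → ℝ) (g : Fin n → ℝ) :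
    ∑ i, w i * f (tstar i) * g i
      = ∑ c ∈ C, f c * ∑ i, w i * (if tstar i = c then 1 else 0) * g i := by
  simp only [mul_sum]
  rw [sum_comm]
  refine sum_congr rfl fun i _ => ?_
  simp [hC i, mul_comm, mul_left_comm]

theorem sum_sum_mul_cross_sub {ι R : Type*} [CommRing R] (C : Finset ι) (a S G : ι → R) :
    ∑ c ∈ C, ∑ c' ∈ C, a c * (S c' * G c - S c * G c')
      = (∑ c ∈ C, a c * G c) * (∑ c ∈ C, S c) - (∑ c ∈ C, a c * S c) * ∑ c ∈ C, G c := by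
  simp only [sum_mul_sum, ← sum_sub_distrib]
  exact sum_congr rfl fun _ _ => sum_congr rfl fun _ _ => by ring

theorem sum_mul_Ddot_eq_sum_crossDiff (T : ℕ) (w : Fin n → ℝ) (lam : ℕ → ℝ)
    (tstar : Fin n → ℕ∞) (Y : Fin n → ℕ → ℝ) {C : Finset ℕ∞} (hC : ∀ i, tstar i ∈ C)
    (hW : ∑ i, w i ≠ 0) (hL : ∑ r ∈ Icc 1 T, lam r ≠ 0) (t : ℕ) :
    ∑ i, w i * lam t * Y i t * Ddot T w lam tstar i t
      = lam t * (∑ c ∈ C, ∑ c' ∈ C, demeanedD T lam c t * crossDiff w tstar Y c c' t)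
          / ((∑ i, w i) * ∑ r ∈ Icc 1 T, lam r) := by
  have cohorts := sum_mul_comp_eq_sum_cohort w tstar hC
  have hSa := cohorts (demeanedD T lam · t) 1
  have hS := cohorts 1 1
  have hGa := cohorts (demeanedD T lam · t) (Y · t)
  have hG := cohorts 1 (Y · t)
  simp only [Pi.one_apply, mul_one, one_mul] at hSa hS hG
  have hDdot : ∑ i, w i * lam t * Y i t * Ddot T w lam tstar i t
      = lam t * ((∑ i, w i * demeanedD T lam (tstar i) t * Y i t)
          - (∑ i, w i * demeanedD T lam (tstar i) t) / (∑ i, w i) * ∑ i, w i * Y i t)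
        / ∑ r ∈ Icc 1 T, lam r := by
    simp only [Ddot_eq T w lam tstar hL]
    generalize (∑ i, w i * demeanedD T lam (tstar i) t) / (∑ i, w i) = A
    simp only [mul_sub, sub_div, sum_sub_distrib, mul_sum, sum_div]
    congr 1 <;> exact sum_congr rfl fun _ _ => by ring
  simp only [hDdot, crossDiff, cohortWeight, cohortTotal]
  rw [sum_sum_mul_cross_sub, ← hSa, ← hS, ← hGa, ← hG]
  field_simp

theorem cohortTotal_eq_zero {w : Fin n → ℝ} (hw : ∀ i, 0 ≤ w i) {tstar : Fin n → ℕ∞}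
    {c : ℕ∞} (hc : cohortWeight w tstar c = 0) (Y : Fin n → ℕ → ℝ) (t : ℕ) :
    cohortTotal w tstar Y c t = 0 := by
  have h := (sum_eq_zero_iff_of_nonneg fun i _ => mul_nonneg (hw i) (by positivity)).mp hc
  exact sum_eq_zero fun i hi => by rw [h i hi, zero_mul]

theorem tau2x2_eq (w : Fin n → ℝ) (tstar : Fin n → ℕ∞) (Y : Fin n → ℕ → ℝ)
    (c c' : ℕ∞) (t t' : ℕ) :
    tau2x2 w tstar Y c c' t t'
      = (cohortTotal w tstar Y c t - cohortTotal w tstar Y c t') / cohortWeight w tstar c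
        - (cohortTotal w tstar Y c' t - cohortTotal w tstar Y c' t') / cohortWeight w tstar c' := by
  simp only [tau2x2, cohortTotal, cohortWeight, mul_sub, sum_sub_distrib]

theorem phat_mul_phat_mul_tau2x2 {w : Fin n → ℝ} (hw : ∀ i, 0 ≤ w i) (tstar : Fin n → ℕ∞)
    (Y : Fin n → ℕ → ℝ) (c c' : ℕ∞) (t t' : ℕ) :
    phat w tstar c * phat w tstar c' * tau2x2 w tstar Y c c' t t'
      = (crossDiff w tstar Y c c' t - crossDiff w tstar Y c c' t') / (∑ i, w i) ^ 2 := by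
  rw [tau2x2_eq, phat, phat, crossDiff, crossDiff]
  change cohortWeight w tstar c / _ * (cohortWeight w tstar c' / _) * _ = _
  rcases eq_or_ne (cohortWeight w tstar c) 0 with hc | hc
  · simp [hc, cohortTotal_eq_zero hw hc]
  rcases eq_or_ne (cohortWeight w tstar c') 0 with hc' | hc'
  · simp [hc', cohortTotal_eq_zero hw hc']
  field_simp
  ring

theorem sum_post_pre_tau2x2 (T : ℕ) {w : Fin n → ℝ} (hw : ∀ i, 0 ≤ w i) (lam : ℕ → ℝ)
    (tstar : Fin n → ℕ∞) (Y : Fin n → ℕ → ℝ) {s : ℕ} (hs : 1 ≤ s) (hsT : s ≤ T + 1)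
    (c' : ℕ∞) :
    ∑ t ∈ Icc s T, ∑ t' ∈ Icc 1 (s - 1),
        lam t * lam t' * phat w tstar s * phat w tstar c' * tau2x2 w tstar Y s c' t t'
      = (∑ t ∈ Icc 1 T, lam t * demeanedD T lam s t * crossDiff w tstar Y s c' t)
          / (∑ i, w i) ^ 2 := by
  rw [sum_mul_demeanedD_natCast T lam _ hs hsT, sum_div]
  refine sum_congr rfl fun t _ => ?_
  rw [sum_div]
  refine sum_congr rfl fun t' _ => ?_
  rw [mul_assoc (lam t * lam t'), mul_assoc (lam t * lam t'), phat_mul_phat_mul_tau2x2 hw]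
  ring

theorem sum_image_natCast_union_top {M : Type*} [AddCommMonoid M] (s : Finset ℕ)
    {f : ℕ∞ → M} (hf : f ⊤ = 0) :
    ∑ c ∈ s.image (fun u : ℕ => (u : ℕ∞)) ∪ {⊤}, f c = ∑ u ∈ s, f u := by
  rw [sum_union (disjoint_singleton_right.mpr (by simp)), sum_singleton, hf, add_zero,
    sum_image fun _ _ _ _ h => Nat.cast_injective h]

end TwoWayFE

open TwoWayFE

theorem statement3_general {n T : ℕ} (w : Fin n → ℝ) (lam : ℕ → ℝ) (tstar : Fin n → ℕ∞)
    (Y : Fin n → ℕ → ℝ)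
    (hw : ∀ i, 0 ≤ w i) (hwpos : 0 < ∑ i, w i)
    (hlam2 : 2 ≤ ∑ t ∈ Finset.Icc 1 T, lam t)
    (htstar : ∀ i, tstar i = ⊤ ∨ ∃ s ∈ Finset.Icc 2 T, tstar i = (s : ℕ∞)) :
    ∑ i, ∑ t ∈ Finset.Icc 1 T, w i * lam t * Y i t * Ddot T w lam tstar i t
      = ((∑ i, w i) / (∑ t ∈ Finset.Icc 1 T, lam t)) *
          ∑ s ∈ Finset.Icc 2 T,
            ∑ c' ∈ (((Finset.Icc 2 T).image (fun u : ℕ => (u : ℕ∞)) ∪ {(⊤ : ℕ∞)}).erase (s : ℕ∞)),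
              ∑ t ∈ Finset.Icc s T, ∑ t' ∈ Finset.Icc 1 (s - 1),
                lam t * lam t' * phat w tstar (s : ℕ∞) * phat w tstar c' *
                  tau2x2 w tstar Y (s : ℕ∞) c' t t' := by
  set C := (Icc 2 T).image (fun u : ℕ => (u : ℕ∞)) ∪ {⊤}
  have hC : ∀ i, tstar i ∈ C := fun i => by
    rcases htstar i with h | ⟨s, hs, h⟩
    · simp [C, h]
    · simp [C, h, mem_Icc.mp hs]
  have hW : ∑ i, w i ≠ 0 := hwpos.ne'
  have hL : ∑ t ∈ Icc 1 T, lam t ≠ 0 := (two_pos.trans_le hlam2).ne'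
  have hcohort : ∀ s ∈ Icc 2 T, ∑ c' ∈ C.erase s, ∑ t ∈ Icc s T, ∑ t' ∈ Icc 1 (s - 1),
      lam t * lam t' * phat w tstar s * phat w tstar c' * tau2x2 w tstar Y s c' t t'
      = (∑ c' ∈ C, ∑ t ∈ Icc 1 T, lam t * demeanedD T lam s t * crossDiff w tstar Y s c' t)
        / (∑ i, w i) ^ 2 := fun s hs => by
    rw [sum_erase _ (by simp [tau2x2]), sum_div]
    exact sum_congr rfl fun c' _ =>
      sum_post_pre_tau2x2 T hw lam tstar Y (by simp at hs; omega) (by simp at hs; omega) c'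
  rw [sum_comm, sum_congr rfl fun t _ =>
      sum_mul_Ddot_eq_sum_crossDiff T w lam tstar Y hC hW hL t,
    sum_congr rfl hcohort, ← sum_div, ← sum_div, ← sum_image_natCast_union_top (Icc 2 T)
      (f := fun c => ∑ c' ∈ C, ∑ t ∈ Icc 1 T,
        lam t * demeanedD T lam c t * crossDiff w tstar Y c c' t)
      (by simp [demeanedD_top])]
  have hswap : ∑ t ∈ Icc 1 T, lam t * ∑ c ∈ C, ∑ c' ∈ C,
        demeanedD T lam c t * crossDiff w tstar Y c c' t
      = ∑ c ∈ C, ∑ c' ∈ C, ∑ t ∈ Icc 1 T,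
          lam t * demeanedD T lam c t * crossDiff w tstar Y c c' t := by
    simp only [mul_sum, ← mul_assoc]
    rw [sum_comm]
    exact sum_congr rfl fun _ _ => sum_comm
  rw [hswap]
  field_simp
  rfl

/-- The numerator of the weighted 2WFE estimator decomposes into
2x2 DiD comparisons `τ̂_{s'}^s(t,t')` of each finite cohort `s` against every other
cohort `s' ≠ s` (including the never treated `⊤`), over post-periods `t ≥ s` and
pre-periods `t' < s` with `λ_t = λ_{t'} = 1`. -/
theorem statement3 {n T : ℕ} (w : Fin n → ℝ) (lam : ℕ → ℝ) (tstar : Fin n → ℕ∞)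
    (Y : Fin n → ℕ → ℝ)
    (hw : ∀ i, 0 ≤ w i) (hwpos : 0 < ∑ i, w i)
    (hlam : ∀ t, lam t = 0 ∨ lam t = 1) (hlam2 : 2 ≤ ∑ t ∈ Finset.Icc 1 T, lam t)
    (htstar : ∀ i, tstar i = ⊤ ∨ ∃ s ∈ Finset.Icc 2 T, tstar i = (s : ℕ∞))
    (hpos : ∀ c : ℕ∞, (∃ i, tstar i = c) →
      0 < ∑ i, w i * (if tstar i = c then 1 else 0)) :
    ∑ i, ∑ t ∈ Finset.Icc 1 T, w i * lam t * Y i t * Ddot T w lam tstar i t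
      = ((∑ i, w i) / (∑ t ∈ Finset.Icc 1 T, lam t)) *
          ∑ s ∈ Finset.Icc 2 T,
            ∑ c' ∈ (((Finset.Icc 2 T).image (fun u : ℕ => (u : ℕ∞)) ∪ {(⊤ : ℕ∞)}).erase (s : ℕ∞)),
              ∑ t ∈ Finset.Icc s T, ∑ t' ∈ Finset.Icc 1 (s - 1),
                lam t * lam t' * phat w tstar (s : ℕ∞) * phat w tstar c' *
                  tau2x2 w tstar Y (s : ℕ∞) c' t t' :=
  statement3_general w lam tstar Y hw hwpos hlam2 htstar
end

section
/- With matching weights w_i^s = 1(t_i*=s) + 1(t_i*=∞)·K_M(i,s)/M (and weight zero for all other cohorts), the weighted 2WFE estimator equals the matched DiD form: τ̂(w^s,λ) = (1/N_s) Σ_i [1(t_i*=s) − 1(t_i*=∞)K_M(i,s)/M]·(Ȳ_i^{post,s}(λ) − Ȳ_i^{pre,s}(λ)), where Ȳ_i^{post,s}(λ) = Σ_{t≥s} λ_t Y_{it}/Σ_{t≥s} λ_t and Ȳ_i^{pre,s}(λ) = Σ_{t<s} λ_t Y_{it}/Σ_{t<s} λ_t. -/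
open Finset

/-! The weights give the adoption cohort `s` and the never treated the same total mass `W` and
every other cohort none. Hence `D̃_t = 1(t ≥ s)/2`, `D̄ = Λ_s/2`, and wherever `w_i ≠ 0` the
demeaned treatment factorises as `D̈_{it} = σ_i (1(t ≥ s) − Λ_s)/2`, with `σ_i = +1` on cohort `s`
and `−1` on the never treated. Splitting time at `s`, with pre/post masses `B`, `A` of `λ`, the
numerator of `τ̂` becomes `Σ_i w_i σ_i (B·Σ_{t≥s} λ_t Y_{it} − A·Σ_{t<s} λ_t Y_{it}) / (2(A+B))`.
The denominator is the same expression at `Y = D`, namely `W·A·B / (2(A+B))`, and the quotient is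
the matched difference in differences. -/

theorem sum_Icc_one_eq_sum_pre_add_sum_post {β : Type*} [AddCommMonoid β] (f : ℕ → β)
    {s T : ℕ} (hs : 1 ≤ s) (hsT : s ≤ T + 1) :
    ∑ t ∈ Icc 1 T, f t = ∑ t ∈ Icc 1 (s - 1), f t + ∑ t ∈ Icc s T, f t := by
  have hpre : Icc 1 (s - 1) = Ico 1 s := by
    rw [← Ico_add_one_right_eq_Icc, Nat.sub_add_cancel hs]
  rw [hpre, ← Ico_add_one_right_eq_Icc, ← Ico_add_one_right_eq_Icc,
    sum_Ico_consecutive f hs hsT]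

section Profile

variable {T s : ℕ} {lam : ℕ → ℝ}

theorem sum_Icc_post_mul_step (f : ℕ → ℝ) :
    ∑ t ∈ Icc s T, f t * (if s ≤ t then 1 else 0) = ∑ t ∈ Icc s T, f t :=
  sum_congr rfl fun t ht => by rw [if_pos (mem_Icc.mp ht).1, mul_one]

theorem sum_Icc_pre_mul_step (f : ℕ → ℝ) :
    ∑ t ∈ Icc 1 (s - 1), f t * (if s ≤ t then 1 else 0) = 0 :=
  sum_eq_zero fun t ht => by rw [if_neg (by have := mem_Icc.mp ht; omega), mul_zero]

theorem Lam_eq_div (hs : 1 ≤ s) (hsT : s ≤ T + 1) :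
    Lam T lam s = (∑ t ∈ Icc s T, lam t) / ∑ t ∈ Icc 1 T, lam t := by
  rw [Lam, sum_Icc_one_eq_sum_pre_add_sum_post _ hs hsT, sum_Icc_pre_mul_step,
    sum_Icc_post_mul_step, zero_add]

theorem sum_Icc_mul_step_sub_Lam (g : ℕ → ℝ) (hs : 1 ≤ s) (hsT : s ≤ T + 1)
    (hL : ∑ t ∈ Icc 1 T, lam t ≠ 0) :
    ∑ t ∈ Icc 1 T, g t * ((if s ≤ t then 1 else 0) - Lam T lam s)
      = ((∑ t ∈ Icc 1 (s - 1), lam t) * ∑ t ∈ Icc s T, g t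
          - (∑ t ∈ Icc s T, lam t) * ∑ t ∈ Icc 1 (s - 1), g t) / ∑ t ∈ Icc 1 T, lam t := by
  have hsplit := sum_Icc_one_eq_sum_pre_add_sum_post lam hs hsT
  have hpre : ∑ t ∈ Icc 1 (s - 1), g t * ((if s ≤ t then 1 else 0) - Lam T lam s)
      = -(∑ t ∈ Icc 1 (s - 1), g t) * Lam T lam s := by
    rw [neg_mul, sum_mul, ← sum_neg_distrib]
    refine sum_congr rfl fun t ht => ?_
    rw [if_neg (by have := mem_Icc.mp ht; omega)]
    ring
  have hpost : ∑ t ∈ Icc s T, g t * ((if s ≤ t then 1 else 0) - Lam T lam s)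
      = (∑ t ∈ Icc s T, g t) * (1 - Lam T lam s) := by
    rw [sum_mul]
    exact sum_congr rfl fun t ht => by rw [if_pos (mem_Icc.mp ht).1]
  rw [sum_Icc_one_eq_sum_pre_add_sum_post _ hs hsT, hpre, hpost, Lam_eq_div hs hsT]
  rw [hsplit] at hL ⊢
  field_simp
  ring

end Profile

section Cohorts

variable {n : ℕ} {tstar : Fin n → ℕ∞} {i : Fin n} {s : ℕ}

def cohortSign (tstar : Fin n → ℕ∞) (s : ℕ) (i : Fin n) : ℝ :=
  (if tstar i = s then 1 else 0) - (if tstar i = ⊤ then 1 else 0)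

theorem Dit_of_eq_coe (h : tstar i = s) (t : ℕ) : Dit tstar i t = if s ≤ t then 1 else 0 := by
  simp only [Dit, h, Nat.cast_le]

theorem Dit_of_eq_top (h : tstar i = ⊤) (t : ℕ) : Dit tstar i t = 0 := by
  simp [Dit, h]

theorem DbarI_of_eq_coe (T : ℕ) (lam : ℕ → ℝ) (h : tstar i = s) :
    DbarI T lam tstar i = Lam T lam s := by
  simp only [DbarI, Lam, Dit_of_eq_coe h]

theorem DbarI_of_eq_top (T : ℕ) (lam : ℕ → ℝ) (h : tstar i = ⊤) : DbarI T lam tstar i = 0 := by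
  simp [DbarI, Dit_of_eq_top h]

theorem cohortSign_mul_Dit (t : ℕ) :
    cohortSign tstar s i * Dit tstar i t
      = (if tstar i = s then 1 else 0) * (if s ≤ t then 1 else 0) := by
  by_cases hs : tstar i = s
  · simp [cohortSign, hs, Dit_of_eq_coe hs]
  by_cases htop : tstar i = ⊤
  · simp [Dit_of_eq_top htop, hs]
  · simp [cohortSign, hs, htop]

end Cohorts

section Balanced

variable {n T s : ℕ} {lam : ℕ → ℝ} {tstar : Fin n → ℕ∞} {w : Fin n → ℝ}

structure IsBalancedWeight (tstar : Fin n → ℕ∞) (s : ℕ) (w : Fin n → ℝ) : Prop where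
  eq_zero_of_ne : ∀ i, tstar i ≠ s → tstar i ≠ ⊤ → w i = 0
  sum_top_eq : ∑ i with tstar i = ⊤, w i = ∑ i with tstar i = s, w i
  sum_ne_zero : ∑ i with tstar i = s, w i ≠ 0

theorem weight_mul_Dit (hsupp : ∀ i, tstar i ≠ s → tstar i ≠ ⊤ → w i = 0) (i : Fin n) (t : ℕ) :
    w i * Dit tstar i t = w i * (if tstar i = s then 1 else 0) * (if s ≤ t then 1 else 0) := by
  by_cases hs : tstar i = s
  · simp [hs, Dit_of_eq_coe hs]
  by_cases htop : tstar i = ⊤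
  · simp [hs, Dit_of_eq_top htop]
  · simp [hsupp i hs htop]

theorem sum_weight_mul_ite (p : Fin n → Prop) [DecidablePred p] :
    ∑ i, w i * (if p i then 1 else 0) = ∑ i with p i, w i := by
  simp only [mul_boole, sum_filter]

theorem sum_weights_eq_two_mul (hsupp : ∀ i, tstar i ≠ s → tstar i ≠ ⊤ → w i = 0)
    (hbal : ∑ i with tstar i = ⊤, w i = ∑ i with tstar i = s, w i) :
    ∑ i, w i = 2 * ∑ i with tstar i = s, w i := by
  have hsplit : ∀ i, w i = (if tstar i = s then w i else 0) + (if tstar i = ⊤ then w i else 0) := by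
    intro i
    by_cases hs : tstar i = s
    · simp [hs]
    by_cases htop : tstar i = ⊤
    · simp [htop]
    · simp [hs, htop, hsupp i hs htop]
  rw [sum_congr rfl fun i _ => hsplit i, sum_add_distrib, ← sum_filter, ← sum_filter, hbal]
  ring

theorem DtildeT_eq (hw : IsBalancedWeight tstar s w) (t : ℕ) :
    DtildeT w tstar t = (if s ≤ t then 1 else 0) / 2 := by
  rw [DtildeT, sum_weights_eq_two_mul hw.eq_zero_of_ne hw.sum_top_eq]
  simp_rw [weight_mul_Dit hw.eq_zero_of_ne _ t]
  rw [← sum_mul, sum_weight_mul_ite, mul_comm 2, mul_div_mul_left _ _ hw.sum_ne_zero]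

theorem Dbar_eq (hw : IsBalancedWeight tstar s w) (hL : ∑ t ∈ Icc 1 T, lam t ≠ 0) :
    Dbar T w lam tstar = Lam T lam s / 2 := by
  have hnum : ∑ i, ∑ t ∈ Icc 1 T, w i * lam t * Dit tstar i t
      = (∑ i with tstar i = s, w i) * ∑ t ∈ Icc 1 T, lam t * (if s ≤ t then 1 else 0) := by
    rw [← sum_weight_mul_ite, sum_mul]
    refine sum_congr rfl fun i _ => ?_
    rw [mul_sum]
    refine sum_congr rfl fun t _ => ?_
    rw [mul_right_comm, weight_mul_Dit hw.eq_zero_of_ne]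
    ring
  rw [Dbar, Lam, hnum, sum_weights_eq_two_mul hw.eq_zero_of_ne hw.sum_top_eq]
  field_simp [hw.sum_ne_zero]

theorem weight_mul_Ddot (hw : IsBalancedWeight tstar s w) (hL : ∑ t ∈ Icc 1 T, lam t ≠ 0)
    (i : Fin n) (t : ℕ) :
    w i * Ddot T w lam tstar i t
      = w i * cohortSign tstar s i * (((if s ≤ t then 1 else 0) - Lam T lam s) / 2) := by
  by_cases hs : tstar i = s
  · have htop : tstar i ≠ ⊤ := hs ▸ ENat.natCast_ne_top s
    rw [Ddot, Dit_of_eq_coe hs, DbarI_of_eq_coe T lam hs, DtildeT_eq hw,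
      Dbar_eq hw hL, cohortSign, if_pos hs, if_neg htop]
    ring
  by_cases htop : tstar i = ⊤
  · rw [Ddot, Dit_of_eq_top htop, DbarI_of_eq_top T lam htop, DtildeT_eq hw,
      Dbar_eq hw hL, cohortSign, if_neg hs, if_pos htop]
    ring
  · simp [hw.eq_zero_of_ne i hs htop]

theorem sum_weight_mul_Ddot (Y : Fin n → ℕ → ℝ) (hw : IsBalancedWeight tstar s w)
    (hs : 1 ≤ s) (hsT : s ≤ T + 1) (hL : ∑ t ∈ Icc 1 T, lam t ≠ 0) :
    ∑ i, ∑ t ∈ Icc 1 T, w i * lam t * Y i t * Ddot T w lam tstar i t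
      = (∑ i, w i * cohortSign tstar s i *
          ((∑ t ∈ Icc 1 (s - 1), lam t) * ∑ t ∈ Icc s T, lam t * Y i t
            - (∑ t ∈ Icc s T, lam t) * ∑ t ∈ Icc 1 (s - 1), lam t * Y i t))
        / (2 * ∑ t ∈ Icc 1 T, lam t) := by
  rw [sum_div]
  refine sum_congr rfl fun i _ => ?_
  calc ∑ t ∈ Icc 1 T, w i * lam t * Y i t * Ddot T w lam tstar i t
      = ∑ t ∈ Icc 1 T, lam t * Y i t * (w i * Ddot T w lam tstar i t) :=
        sum_congr rfl fun t _ => by ring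
    _ = w i * cohortSign tstar s i / 2 *
          ∑ t ∈ Icc 1 T, lam t * Y i t * ((if s ≤ t then 1 else 0) - Lam T lam s) := by
        rw [mul_sum]
        exact sum_congr rfl fun t _ => by rw [weight_mul_Ddot hw hL]; ring
    _ = _ := by
        rw [sum_Icc_mul_step_sub_Lam _ hs hsT hL]
        field_simp

theorem sum_cohortSign_mul_Dit :
    ∑ i, w i * cohortSign tstar s i *
        ((∑ t ∈ Icc 1 (s - 1), lam t) * ∑ t ∈ Icc s T, lam t * Dit tstar i t
          - (∑ t ∈ Icc s T, lam t) * ∑ t ∈ Icc 1 (s - 1), lam t * Dit tstar i t)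
      = (∑ i with tstar i = s, w i) * ((∑ t ∈ Icc 1 (s - 1), lam t) * ∑ t ∈ Icc s T, lam t) := by
  rw [← sum_weight_mul_ite, sum_mul]
  refine sum_congr rfl fun i _ => ?_
  have hsign : ∀ S : Finset ℕ, cohortSign tstar s i * ∑ t ∈ S, lam t * Dit tstar i t
      = (if tstar i = s then 1 else 0) * ∑ t ∈ S, lam t * (if s ≤ t then 1 else 0) := by
    intro S
    simp_rw [mul_sum, mul_left_comm _ (lam _), cohortSign_mul_Dit]
  rw [mul_assoc, mul_sub, mul_left_comm _ (∑ t ∈ Icc 1 (s - 1), lam t),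
    mul_left_comm _ (∑ t ∈ Icc s T, lam t), hsign, hsign, sum_Icc_post_mul_step,
    sum_Icc_pre_mul_step]
  ring

theorem tauhat_eq_of_isBalancedWeight (Y : Fin n → ℕ → ℝ) (hw : IsBalancedWeight tstar s w)
    (hs : 1 ≤ s) (hsT : s ≤ T + 1) (hpost : 0 < ∑ t ∈ Icc s T, lam t)
    (hpre : 0 < ∑ t ∈ Icc 1 (s - 1), lam t) :
    tauhat T w lam tstar Y
      = (1 / ∑ i with tstar i = s, w i) * ∑ i, w i * cohortSign tstar s i *
          ((∑ t ∈ Icc s T, lam t * Y i t) / (∑ t ∈ Icc s T, lam t)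
            - (∑ t ∈ Icc 1 (s - 1), lam t * Y i t) / (∑ t ∈ Icc 1 (s - 1), lam t)) := by
  have hL : ∑ t ∈ Icc 1 T, lam t ≠ 0 := by
    rw [sum_Icc_one_eq_sum_pre_add_sum_post lam hs hsT]
    positivity
  -- the denominator of `τ̂` is its numerator at `Y = Dit tstar`
  rw [tauhat, sum_weight_mul_Ddot Y hw hs hsT hL, sum_weight_mul_Ddot _ hw hs hsT hL,
    sum_cohortSign_mul_Dit]
  simp_rw [div_sub_div _ _ hpost.ne' hpre.ne', ← mul_div_assoc, ← sum_div]
  field_simp [hw.sum_ne_zero]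

end Balanced

theorem statement5_general {n T : ℕ} (s M : ℕ) (lam : ℕ → ℝ) (tstar : Fin n → ℕ∞)
    (Y : Fin n → ℕ → ℝ) (K : Fin n → ℕ)
    (hs : s ∈ Finset.Icc 2 T) (hM : 1 ≤ M)
    (hNs : 0 < (Finset.univ.filter (fun i => tstar i = (s : ℕ∞))).card)
    (hK : (∑ i, if tstar i = ⊤ then K i else 0)
      = (Finset.univ.filter (fun i => tstar i = (s : ℕ∞))).card * M)
    (hpost : 0 < ∑ t ∈ Finset.Icc s T, lam t)
    (hpre : 0 < ∑ t ∈ Finset.Icc 1 (s - 1), lam t) :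
    tauhat T
        (fun i => (if tstar i = (s : ℕ∞) then (1 : ℝ) else 0)
          + (if tstar i = ⊤ then (K i : ℝ) / M else 0))
        lam tstar Y
      = (1 / ((Finset.univ.filter (fun i => tstar i = (s : ℕ∞))).card : ℝ)) *
          ∑ i, ((if tstar i = (s : ℕ∞) then (1 : ℝ) else 0)
              - (if tstar i = ⊤ then (K i : ℝ) / M else 0)) *
            ((∑ t ∈ Finset.Icc s T, lam t * Y i t) / (∑ t ∈ Finset.Icc s T, lam t)
              - (∑ t ∈ Finset.Icc 1 (s - 1), lam t * Y i t) /
                  (∑ t ∈ Finset.Icc 1 (s - 1), lam t)) := by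
  obtain ⟨hs2, hsT⟩ := mem_Icc.mp hs
  have hM0 : (M : ℝ) ≠ 0 := by positivity
  set w : Fin n → ℝ := fun i => (if tstar i = (s : ℕ∞) then (1 : ℝ) else 0)
    + (if tstar i = ⊤ then (K i : ℝ) / M else 0)
  have hcohort : ∑ i with tstar i = s, w i = #{i | tstar i = s} := by
    rw [sum_congr rfl fun i hi => show w i = 1 by simp [w, (mem_filter.mp hi).2], sum_const,
      nsmul_one]
  have hnever : ∑ i with tstar i = ⊤, w i = #{i | tstar i = s} := by
    have hKR : ∑ i with tstar i = ⊤, (K i : ℝ) = #{i | tstar i = s} * M := by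
      rw [sum_filter]
      exact_mod_cast hK
    rw [sum_congr rfl fun i hi => show w i = K i / M by simp [w, (mem_filter.mp hi).2],
      ← sum_div, hKR, mul_div_cancel_right₀ _ hM0]
  have hw : IsBalancedWeight tstar s w :=
    ⟨fun i h1 h2 => by simp [w, h1, h2], hnever.trans hcohort.symm,
      hcohort ▸ by exact_mod_cast hNs.ne'⟩
  have hsign : ∀ i, w i * cohortSign tstar s i
      = (if tstar i = s then 1 else 0) - (if tstar i = ⊤ then (K i : ℝ) / M else 0) := by
    intro i
    by_cases h : tstar i = ⊤ <;> simp [w, cohortSign, h]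
  rw [tauhat_eq_of_isBalancedWeight Y hw (by omega) (by omega) hpost hpre, hcohort]
  simp_rw [hsign]

/-- With matching weights
`w_i^s = 1(t_i* = s) + 1(t_i* = ∞) K_M(i,s)/M`, the weighted 2WFE estimator equals
the matched DiD form
`(1/N_s) Σ_i [1(t_i* = s) − 1(t_i* = ∞) K_M(i,s)/M]·(Ȳ_i^{post,s}(λ) − Ȳ_i^{pre,s}(λ))`. -/
theorem statement5 {n T : ℕ} (s M : ℕ) (lam : ℕ → ℝ) (tstar : Fin n → ℕ∞)
    (Y : Fin n → ℕ → ℝ) (K : Fin n → ℕ)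
    (hs : s ∈ Finset.Icc 2 T) (hM : 1 ≤ M)
    (hNs : 0 < (Finset.univ.filter (fun i => tstar i = (s : ℕ∞))).card)
    (hK : (∑ i, if tstar i = ⊤ then K i else 0)
      = (Finset.univ.filter (fun i => tstar i = (s : ℕ∞))).card * M)
    (hlam : ∀ t, lam t = 0 ∨ lam t = 1)
    (hpost : 0 < ∑ t ∈ Finset.Icc s T, lam t)
    (hpre : 0 < ∑ t ∈ Finset.Icc 1 (s - 1), lam t) :
    tauhat T
        (fun i => (if tstar i = (s : ℕ∞) then (1 : ℝ) else 0)
          + (if tstar i = ⊤ then (K i : ℝ) / M else 0))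
        lam tstar Y
      = (1 / ((Finset.univ.filter (fun i => tstar i = (s : ℕ∞))).card : ℝ)) *
          ∑ i, ((if tstar i = (s : ℕ∞) then (1 : ℝ) else 0)
              - (if tstar i = ⊤ then (K i : ℝ) / M else 0)) *
            ((∑ t ∈ Finset.Icc s T, lam t * Y i t) / (∑ t ∈ Finset.Icc s T, lam t)
              - (∑ t ∈ Finset.Icc 1 (s - 1), lam t * Y i t) /
                  (∑ t ∈ Finset.Icc 1 (s - 1), lam t)) :=
  statement5_general s M lam tstar Y K hs hM hNs hK hpost hpre
end

section
/- Under conditional parallel trends, the cross-cohort pooling bias term admits a density-ratio representation: E[Y_t(0) − Y_{t'}(0) | t* = s] − E[Y_t(0) − Y_{t'}(0) | t* = s'] = E[ E[Y_t(0) − Y_{t'}(0) | t* = s, X] · (f_s(X) − f_{s'}(X)) / f(X) ], where f, f_s, f_{s'} are the unconditional density of X and the conditional densities of X given t*=s and t*=s'. In particular the bias vanishes if f_s = f_{s'} a.e. or if E[Y_t(0)−Y_{t'}(0) | t*=s, X] is a.s. constant in X. -/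
open Finset
open scoped Classical

lemma ite_irrel {α : Sort*} {p : Prop} (i1 i2 : Decidable p) (a b : α) :
    @ite _ p i1 a b = @ite _ p i2 a b := by
  by_cases h : p
  · rw [if_pos h, if_pos h]
  · rw [if_neg h, if_neg h]

lemma fiber_decomp {Ω 𝓧 : Type*} [Fintype Ω] (X : Ω → 𝓧) (A : Ω → Prop) [DecidablePred A]
    (g : Ω → ℝ) :
    (∑ ω, if A ω then g ω else 0)
      = ∑ x ∈ Finset.univ.image X, ∑ ω, if A ω ∧ X ω = x then g ω else 0 := by
  rw [Finset.sum_comm]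
  refine Finset.sum_congr rfl fun ω _ => ?_
  by_cases hA : A ω
  · simp only [hA, true_and]
    rw [Finset.sum_ite_eq]
    simp
  · simp [hA]

lemma sum_mul_comp {Ω 𝓧 : Type*} [Fintype Ω] (P : Ω → ℝ) (X : Ω → 𝓧) (h : 𝓧 → ℝ) :
    (∑ ω, P ω * h (X ω))
      = ∑ x ∈ Finset.univ.image X, (∑ ω, if X ω = x then P ω else 0) * h x := by
  have e : ∀ x, (∑ ω, if X ω = x then P ω else 0) * h x
      = ∑ ω, if X ω = x then P ω * h x else 0 := by
    intro x
    rw [Finset.sum_mul]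
    exact Finset.sum_congr rfl fun ω _ => by split <;> simp
  calc (∑ ω, P ω * h (X ω))
      = ∑ ω, ∑ x ∈ Finset.univ.image X, (if X ω = x then P ω * h x else 0) := by
        refine Finset.sum_congr rfl fun ω _ => ?_
        rw [Finset.sum_ite_eq]
        simp
    _ = ∑ x ∈ Finset.univ.image X, ∑ ω, (if X ω = x then P ω * h x else 0) :=
        Finset.sum_comm
    _ = _ := Finset.sum_congr rfl fun x _ => (e x).symm

lemma cexp_eq_div {Ω : Type*} [Fintype Ω] (P : Ω → ℝ) (A : Ω → Prop) [DecidablePred A]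
    (Z : Ω → ℝ) :
    cexp P A Z
      = (∑ ω, if A ω then P ω * Z ω else 0) / (∑ ω, if A ω then P ω else 0) := by
  unfold cexp
  congr 1 <;> exact Finset.sum_congr rfl fun ω _ => ite_irrel _ _ _ _

/-- Under conditional parallel trends, the cross-cohort pooling
bias admits a density-ratio representation:
`E[ΔY(0) ∣ t*=s] − E[ΔY(0) ∣ t*=s'] = E[ E[ΔY(0) ∣ t*=s, X] · (f_s(X) − f_{s'}(X))/f(X) ]`,
where `f, f_s, f_{s'}` are the (discrete) densities of `X`, `X ∣ t*=s`, `X ∣ t*=s'`.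
In particular the bias vanishes if `f_s = f_{s'}` or if `E[ΔY(0) ∣ t*=s, X]` is
constant on the support of `X`. -/
theorem statement10 {Ω 𝓧 : Type*} [Fintype Ω]
    (P : Ω → ℝ) (hP : ∀ ω, 0 ≤ P ω) (hP1 : ∑ ω, P ω = 1)
    (tstar : Ω → ℕ∞) (X : Ω → 𝓧)
    (ΔY : Ω → ℝ)  -- the untreated trend Y_t(0) − Y_{t'}(0)
    (s s' : ℕ∞) (hss' : s ≠ s')
    (hs : 0 < ∑ ω, if tstar ω = s then P ω else 0)
    (hs' : 0 < ∑ ω, if tstar ω = s' then P ω else 0)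
    -- overlap on every covariate cell in the support of X
    (hov : ∀ x : 𝓧, 0 < (∑ ω, if X ω = x then P ω else 0) →
      0 < (∑ ω, if tstar ω = s ∧ X ω = x then P ω else 0) ∧
        0 < (∑ ω, if tstar ω = s' ∧ X ω = x then P ω else 0))
    -- conditional parallel trends: E[ΔY(0) ∣ t* = u, X = x] does not depend on u
    (hCPT : ∀ (u : ℕ∞) (x : 𝓧), 0 < (∑ ω, if tstar ω = u ∧ X ω = x then P ω else 0) →
      cexp P (fun ω => tstar ω = u ∧ X ω = x) ΔY = cexp P (fun ω => X ω = x) ΔY) :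
    (cexp P (fun ω => tstar ω = s) ΔY - cexp P (fun ω => tstar ω = s') ΔY
        = ∑ ω, P ω *
            (cexp P (fun ω' => tstar ω' = s ∧ X ω' = X ω) ΔY *
              (((∑ ω', if tstar ω' = s ∧ X ω' = X ω then P ω' else 0) /
                  (∑ ω', if tstar ω' = s then P ω' else 0))
                - ((∑ ω', if tstar ω' = s' ∧ X ω' = X ω then P ω' else 0) /
                    (∑ ω', if tstar ω' = s' then P ω' else 0))) /
              (∑ ω', if X ω' = X ω then P ω' else 0)))
    ∧ ((∀ x : 𝓧,
          (∑ ω, if tstar ω = s ∧ X ω = x then P ω else 0) /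
              (∑ ω, if tstar ω = s then P ω else 0)
            = (∑ ω, if tstar ω = s' ∧ X ω = x then P ω else 0) /
                (∑ ω, if tstar ω = s' then P ω else 0)) →
        cexp P (fun ω => tstar ω = s) ΔY - cexp P (fun ω => tstar ω = s') ΔY = 0)
    ∧ ((∃ κ : ℝ, ∀ x : 𝓧, 0 < (∑ ω, if X ω = x then P ω else 0) →
          cexp P (fun ω => tstar ω = s ∧ X ω = x) ΔY = κ) →
        cexp P (fun ω => tstar ω = s) ΔY - cexp P (fun ω => tstar ω = s') ΔY = 0) := by
  have nn : ∀ A : Ω → Prop, (0:ℝ) ≤ ∑ ω, if A ω then P ω else 0 := fun A =>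
    Finset.sum_nonneg fun ω _ => by by_cases h : A ω <;> simp [h, hP ω]
  have hF0 : ∀ x : 𝓧, (∑ ω, if X ω = x then P ω else 0) = 0 →
      ∀ ω, X ω = x → P ω = 0 := by
    intro x hx ω hω
    have h := (Finset.sum_eq_zero_iff_of_nonneg
      (fun ω _ => by by_cases h : X ω = x <;> simp [h, hP ω])).mp hx ω (Finset.mem_univ ω)
    simpa [hω] using h
  have hJ0 : ∀ (u : ℕ∞) (x : 𝓧), (∑ ω, if X ω = x then P ω else 0) = 0 →
      (∑ ω, if tstar ω = u ∧ X ω = x then P ω else 0) = 0 := by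
    intro u x hx
    refine Finset.sum_eq_zero fun ω _ => ?_
    by_cases h : tstar ω = u ∧ X ω = x
    · simp [h, hF0 x hx ω h.2]
    · simp [h]
  have hM0 : ∀ (u : ℕ∞) (x : 𝓧), (∑ ω, if X ω = x then P ω else 0) = 0 →
      (∑ ω, if tstar ω = u ∧ X ω = x then P ω * ΔY ω else 0) = 0 := by
    intro u x hx
    refine Finset.sum_eq_zero fun ω _ => ?_
    by_cases h : tstar ω = u ∧ X ω = x
    · simp [h, hF0 x hx ω h.2]
    · simp [h]
  -- flavor bridges for cexp
  have ceJ : ∀ (u : ℕ∞) (x : 𝓧),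
      cexp P (fun ω' => tstar ω' = u ∧ X ω' = x) ΔY
        = (∑ ω', if tstar ω' = u ∧ X ω' = x then P ω' * ΔY ω' else 0) /
            (∑ ω', if tstar ω' = u ∧ X ω' = x then P ω' else 0) := fun u x =>
    cexp_eq_div P _ ΔY
  have ceX : ∀ x : 𝓧,
      cexp P (fun ω' => X ω' = x) ΔY
        = (∑ ω', if X ω' = x then P ω' * ΔY ω' else 0) /
            (∑ ω', if X ω' = x then P ω' else 0) := fun x =>
    cexp_eq_div P _ ΔY
  have ceT : ∀ u : ℕ∞,
      cexp P (fun ω => tstar ω = u) ΔY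
        = (∑ ω, if tstar ω = u then P ω * ΔY ω else 0) /
            (∑ ω, if tstar ω = u then P ω else 0) := fun u =>
    cexp_eq_div P _ ΔY
  -- per-cell identity
  have hterm : ∀ x : 𝓧,
      (∑ ω, if X ω = x then P ω else 0) *
        (cexp P (fun ω' => tstar ω' = s ∧ X ω' = x) ΔY *
          (((∑ ω', if tstar ω' = s ∧ X ω' = x then P ω' else 0) /
              (∑ ω', if tstar ω' = s then P ω' else 0))
            - ((∑ ω', if tstar ω' = s' ∧ X ω' = x then P ω' else 0) /
                (∑ ω', if tstar ω' = s' then P ω' else 0))) /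
          (∑ ω', if X ω' = x then P ω' else 0))
      = (∑ ω', if tstar ω' = s ∧ X ω' = x then P ω' * ΔY ω' else 0) /
          (∑ ω', if tstar ω' = s then P ω' else 0)
        - (∑ ω', if tstar ω' = s' ∧ X ω' = x then P ω' * ΔY ω' else 0) /
            (∑ ω', if tstar ω' = s' then P ω' else 0) := by
    intro x
    by_cases hFx : (∑ ω, if X ω = x then P ω else 0) = 0
    · rw [hFx, hM0 s x hFx, hM0 s' x hFx]
      simp
    · have hFpos : 0 < ∑ ω, if X ω = x then P ω else 0 := (nn _).lt_of_ne (Ne.symm hFx)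
      obtain ⟨hJs, hJs'⟩ := hov x hFpos
      have hc : (∑ ω', if tstar ω' = s ∧ X ω' = x then P ω' * ΔY ω' else 0) /
            (∑ ω', if tstar ω' = s ∧ X ω' = x then P ω' else 0)
          = (∑ ω', if tstar ω' = s' ∧ X ω' = x then P ω' * ΔY ω' else 0) /
            (∑ ω', if tstar ω' = s' ∧ X ω' = x then P ω' else 0) := by
        rw [← ceJ s x, ← ceJ s' x]
        exact (hCPT s x hJs).trans (hCPT s' x hJs').symm
      rw [ceJ s x]
      rw [mul_comm, div_mul_cancel₀ _ hFx]
      rw [mul_sub, ← mul_div_assoc, ← mul_div_assoc, div_mul_cancel₀ _ hJs.ne']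
      have h2 : (∑ ω', if tstar ω' = s ∧ X ω' = x then P ω' * ΔY ω' else 0) /
            (∑ ω', if tstar ω' = s ∧ X ω' = x then P ω' else 0) *
            (∑ ω', if tstar ω' = s' ∧ X ω' = x then P ω' else 0)
          = ∑ ω', if tstar ω' = s' ∧ X ω' = x then P ω' * ΔY ω' else 0 := by
        rw [hc, div_mul_cancel₀ _ hJs'.ne']
      rw [h2]
  -- tower decompositions (statement flavor thanks to [DecidablePred A])
  have hNs := fiber_decomp X (fun ω => tstar ω = s) (fun ω => P ω * ΔY ω)
  have hNs' := fiber_decomp X (fun ω => tstar ω = s') (fun ω => P ω * ΔY ω)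
  have hTs := fiber_decomp X (fun ω => tstar ω = s) P
  have hTs' := fiber_decomp X (fun ω => tstar ω = s') P
  have main : cexp P (fun ω => tstar ω = s) ΔY - cexp P (fun ω => tstar ω = s') ΔY
      = ∑ ω, P ω *
          (cexp P (fun ω' => tstar ω' = s ∧ X ω' = X ω) ΔY *
            (((∑ ω', if tstar ω' = s ∧ X ω' = X ω then P ω' else 0) /
                (∑ ω', if tstar ω' = s then P ω' else 0))
              - ((∑ ω', if tstar ω' = s' ∧ X ω' = X ω then P ω' else 0) /
                  (∑ ω', if tstar ω' = s' then P ω' else 0))) /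
            (∑ ω', if X ω' = X ω then P ω' else 0)) := by
    have hR := sum_mul_comp P X (fun x =>
      cexp P (fun ω' => tstar ω' = s ∧ X ω' = x) ΔY *
        (((∑ ω', if tstar ω' = s ∧ X ω' = x then P ω' else 0) /
            (∑ ω', if tstar ω' = s then P ω' else 0))
          - ((∑ ω', if tstar ω' = s' ∧ X ω' = x then P ω' else 0) /
              (∑ ω', if tstar ω' = s' then P ω' else 0))) /
        (∑ ω', if X ω' = x then P ω' else 0))
    rw [hR, Finset.sum_congr rfl fun x _ => hterm x]
    rw [Finset.sum_sub_distrib, ← Finset.sum_div, ← Finset.sum_div]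
    rw [ceT s, ceT s', hNs, hNs']
  refine ⟨main, ?_, ?_⟩
  · intro h
    rw [main]
    refine Finset.sum_eq_zero fun ω _ => ?_
    rw [h (X ω), sub_self]
    simp
  · rintro ⟨κ, hκ⟩
    rw [main]
    have hR := sum_mul_comp P X (fun x =>
      cexp P (fun ω' => tstar ω' = s ∧ X ω' = x) ΔY *
        (((∑ ω', if tstar ω' = s ∧ X ω' = x then P ω' else 0) /
            (∑ ω', if tstar ω' = s then P ω' else 0))
          - ((∑ ω', if tstar ω' = s' ∧ X ω' = x then P ω' else 0) /
              (∑ ω', if tstar ω' = s' then P ω' else 0))) /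
        (∑ ω', if X ω' = x then P ω' else 0))
    rw [hR]
    have e : ∀ x ∈ Finset.univ.image X,
        (∑ ω, if X ω = x then P ω else 0) *
          (cexp P (fun ω' => tstar ω' = s ∧ X ω' = x) ΔY *
            (((∑ ω', if tstar ω' = s ∧ X ω' = x then P ω' else 0) /
                (∑ ω', if tstar ω' = s then P ω' else 0))
              - ((∑ ω', if tstar ω' = s' ∧ X ω' = x then P ω' else 0) /
                  (∑ ω', if tstar ω' = s' then P ω' else 0))) /
            (∑ ω', if X ω' = x then P ω' else 0))
        = κ * (((∑ ω', if tstar ω' = s ∧ X ω' = x then P ω' else 0) /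
                (∑ ω', if tstar ω' = s then P ω' else 0))
              - ((∑ ω', if tstar ω' = s' ∧ X ω' = x then P ω' else 0) /
                  (∑ ω', if tstar ω' = s' then P ω' else 0))) := by
      intro x _
      by_cases hFx : (∑ ω, if X ω = x then P ω else 0) = 0
      · rw [hFx, hJ0 s x hFx, hJ0 s' x hFx]
        simp
      · have hFpos : 0 < ∑ ω, if X ω = x then P ω else 0 := (nn _).lt_of_ne (Ne.symm hFx)
        rw [hκ x hFpos]
        rw [mul_comm, div_mul_cancel₀ _ hFx]
    rw [Finset.sum_congr rfl e, ← Finset.mul_sum, Finset.sum_sub_distrib,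
      ← Finset.sum_div, ← Finset.sum_div, ← hTs, ← hTs',
      div_self hs.ne', div_self hs'.ne', sub_self, mul_zero]
end
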